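/- arXiv:2411.00906 — 2 statements merged into one kernel-verified Lean document; each statement's English description precedes it below -/
import Mathlib

section
/- Let γ : x ↷ y be an h-short arc in a δ-hyperbolic metric space X and p ∈ X. Let x_γ, y_γ ∈ γ be such that l(γ[x, x_γ]) = (y|p)_x and l(γ[y_γ, y]) = (x|p)_y. If z ∈ γ[x, y_γ] and u ∈ γ[x, z], then d(p,u) − d(p,z) ≥ d(u,z) − 8δ − 8h. -/
open Set Filter Metric MeasureTheory

/-- Conformal density `ρ_ε(x) = exp(-ε d(x,p))`. -/
noncomputable def rho {X : Type*} [MetricSpace X] (ε : ℝ) (p x : X) : ℝ :=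
  Real.exp (-(ε * dist x p))

/-- `γ : [0,L] → X` is a curve parametrized by arclength: continuous, and the
length (total variation) of `γ` on `[s,t] ⊆ [0,L]` equals `t - s`. -/
def IsUnitSpeed {X : Type*} [MetricSpace X] (γ : ℝ → X) (L : ℝ) : Prop :=
  ContinuousOn γ (Set.Icc 0 L) ∧
    ∀ s t : ℝ, 0 ≤ s → s ≤ t → t ≤ L →
      eVariationOn γ (Set.Icc s t) = ENNReal.ofReal (t - s)

/-- Conformal deformation distance `d_ρ(x,y) = inf_γ ∫_γ ρ ds`, the infimum taken
over rectifiable curves from `x` to `y` (parametrized by arclength). -/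
noncomputable def confDist {X : Type*} [MetricSpace X] (ρ : X → ℝ) (x y : X) : ℝ :=
  sInf { l : ℝ | ∃ (γ : ℝ → X) (T : ℝ), 0 ≤ T ∧ IsUnitSpeed γ T ∧
    γ 0 = x ∧ γ T = y ∧ l = ∫ t in (0:ℝ)..T, ρ (γ t) }

/-- `X` is intrinsic: any two points can be joined, for each `c > 1`, by a curve
of length at most `c·d(x,y)`. -/
def Intrinsic (X : Type*) [MetricSpace X] : Prop :=
  ∀ x y : X, ∀ c : ℝ, 1 < c → ∃ (γ : ℝ → X) (T : ℝ), 0 ≤ T ∧ IsUnitSpeed γ T ∧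
    γ 0 = x ∧ γ T = y ∧ T ≤ c * dist x y

/-- Gromov product `(x|y)_p`. -/
noncomputable def gprod {X : Type*} [MetricSpace X] (x y p : X) : ℝ :=
  (dist x p + dist y p - dist x y) / 2

/-- `X` is Gromov `δ`-hyperbolic. -/
def GromovHyperbolic (X : Type*) [MetricSpace X] (δ : ℝ) : Prop :=
  ∀ x y z p : X, gprod x z p ≥ min (gprod x y p) (gprod y z p) - δ

/-- A sequence is Cauchy with respect to a (possibly different) distance function `d`. -/
def CauchyIn {X : Type*} (d : X → X → ℝ) (u : ℕ → X) : Prop :=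
  ∀ η : ℝ, 0 < η → ∃ N : ℕ, ∀ m n : ℕ, N ≤ m → N ≤ n → d (u m) (u n) < η

/-- A sequence does not converge to any point of `X` with respect to `d`. -/
def DivergesIn {X : Type*} (d : X → X → ℝ) (u : ℕ → X) : Prop :=
  ¬ ∃ z : X, Filter.Tendsto (fun n => d (u n) z) Filter.atTop (nhds 0)

/-- A sequence representing a point of the metric boundary of `(X, d)`:
`d`-Cauchy but not `d`-convergent in `X`. -/
def BoundarySeq {X : Type*} (d : X → X → ℝ) (u : ℕ → X) : Prop :=
  CauchyIn d u ∧ DivergesIn d u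

/-- Distance from `z` to the metric boundary of `(X,d)`: infimum, over boundary
points (represented by Cauchy non-convergent sequences), of the limiting distance. -/
noncomputable def bdryDist {X : Type*} (d : X → X → ℝ) (z : X) : ℝ :=
  sInf { r : ℝ | ∃ u : ℕ → X, BoundarySeq d u ∧
    Filter.Tendsto (fun n => d z (u n)) Filter.atTop (nhds r) }

/-- A Gromov sequence: `(u_i|u_j)_p → ∞` as `i, j → ∞`. -/
def GromovSeq {X : Type*} [MetricSpace X] (p : X) (u : ℕ → X) : Prop :=
  Filter.Tendsto (fun nm : ℕ × ℕ => gprod (u nm.1) (u nm.2) p)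
    Filter.atTop Filter.atTop


private lemma unitSpeed_dist_le {X : Type*} [MetricSpace X] {γ : ℝ → X} {L : ℝ}
    (hus : IsUnitSpeed γ L) {s t : ℝ} (hs : 0 ≤ s) (hst : s ≤ t) (htL : t ≤ L) :
    dist (γ s) (γ t) ≤ t - s := by
  have hv := hus.2 s t hs hst htL
  have h1 : edist (γ s) (γ t) ≤ ENNReal.ofReal (t - s) := by
    rw [← hv]
    exact eVariationOn.edist_le γ ⟨le_refl s, hst⟩ ⟨hst, le_refl t⟩
  have h2 : edist (γ s) (γ t) ≠ ⊤ := edist_ne_top _ _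
  rw [edist_dist] at h1
  have := (ENNReal.ofReal_le_ofReal_iff (by linarith)).1 h1
  linarith [dist_nonneg (x := γ s) (y := γ t)]

/-- Lemma `lem1`: for an `h`-short arc `γ : x ↷ y` in a `δ`-hyperbolic
space with subdivision points induced by `p`, if `z ∈ γ[x, y_γ]` and `u ∈ γ[x, z]`,
then `d(p,u) - d(p,z) ≥ d(u,z) - 8δ - 8h`. -/
theorem hShort_arc_distance_to_point {X : Type*} [MetricSpace X]
    (δ h : ℝ) (hδ : 0 ≤ δ) (hh : 0 ≤ h) (hhyp : GromovHyperbolic X δ)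
    (p x y : X) (γ : ℝ → X) (L : ℝ) (hL : 0 ≤ L)
    (hus : IsUnitSpeed γ L) (h0 : γ 0 = x) (hLy : γ L = y)
    (hshort : L ≤ dist x y + h)
    (a : ℝ) (ha : a ∈ Set.Icc 0 L) (haval : a = gprod y p x)   -- x_γ = γ a
    (b : ℝ) (hb : b ∈ Set.Icc 0 L) (hbval : L - b = gprod x p y) -- y_γ = γ b
    (c : ℝ) (hc : c ∈ Set.Icc 0 b)   -- z = γ c ∈ γ[x, y_γ]
    (e : ℝ) (he : e ∈ Set.Icc 0 c) : -- u = γ e ∈ γ[x, z]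
    dist p (γ e) - dist p (γ c) ≥ dist (γ e) (γ c) - 8 * δ - 8 * h := by
  obtain ⟨he0, hec⟩ := he
  obtain ⟨hc0, hcb⟩ := hc
  obtain ⟨hb0, hbL⟩ := hb
  have hcL : c ≤ L := le_trans hcb hbL
  have he0' : (0:ℝ) ≤ e := he0
  have heL : e ≤ L := le_trans hec hcL
  -- Lipschitz bounds
  have hxz : dist x (γ c) ≤ c := by
    have := unitSpeed_dist_le hus (le_refl 0) hc0 hcL
    rw [h0] at this; linarith
  have hxu : dist x (γ e) ≤ e := by
    have := unitSpeed_dist_le hus (le_refl 0) he0 heL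
    rw [h0] at this; linarith
  have huz : dist (γ e) (γ c) ≤ c - e := unitSpeed_dist_le hus he0 hec hcL
  have hzy : dist (γ c) y ≤ L - c := by
    have := unitSpeed_dist_le hus hc0 hcL (le_refl L)
    rw [hLy] at this; linarith
  -- lower bounds
  have hxy : dist x y ≥ L - h := by linarith
  have hxz' : dist x (γ c) ≥ c - h := by
    have := dist_triangle x (γ c) y
    linarith
  -- c ≤ a + h
  have hsum : a + (L - b) = dist x y := by
    rw [haval, hbval]
    unfold gprod
    rw [dist_comm y x, dist_comm p x, dist_comm p y]
    ring
  have hcah : c ≤ a + h := by linarith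
  -- hyperbolicity at base x with p, y, γ c
  have hhyp1 := hhyp p y (γ c) x
  have hgyz : gprod y (γ c) x ≥ c - h := by
    unfold gprod
    rw [dist_comm y x, dist_comm (γ c) x, dist_comm y (γ c)]
    linarith
  have hgpy : gprod p y x = a := by
    rw [haval]; unfold gprod
    rw [dist_comm p y]
    ring
  have hmin : min (gprod p y x) (gprod y (γ c) x) ≥ c - h := by
    rw [ge_iff_le, le_min_iff]
    constructor
    · rw [hgpy]; linarith
    · linarith
  have hgpz : gprod p (γ c) x ≥ c - h - δ := by
    have := hhyp1
    simp only [ge_iff_le] at this hmin ⊢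
    linarith
  have hpz : dist p (γ c) ≤ dist p x - c + 2 * h + 2 * δ := by
    unfold gprod at hgpz
    rw [dist_comm (γ c) x] at hgpz
    rw [dist_comm p (γ c)] at *
    linarith [dist_comm p x ▸ (le_refl (dist p x))]
  have hpu : dist p (γ e) ≥ dist p x - e := by
    have := dist_triangle p (γ e) x
    have h2 := dist_comm x (γ e)
    linarith
  linarith
end

section
/- Let X be an intrinsic δ-hyperbolic space, p ∈ X, and d_ε the conformal deformation for 0 < ε ≤ ε₀(δ). Then there is a constant C ≥ 1 depending only on δ such that for all x, y ∈ X: (1/C) d_ε(x,y) ≤ (e^{−ε (x|y)_p}/ε) · min(1/2, ε d(x,y)) ≤ C d_ε(x,y). -/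
open Set Filter Metric MeasureTheory
open scoped Classical

section Aux
variable {X : Type*} [MetricSpace X]

lemma gprod_nonneg' (x y p : X) : 0 ≤ gprod x y p := by
  have h := dist_triangle x p y
  rw [dist_comm p y] at h
  unfold gprod; linarith

lemma gprod_le_dist_left (x y p : X) : gprod x y p ≤ dist x p := by
  have h := dist_triangle y x p
  rw [dist_comm y x] at h
  unfold gprod; linarith

lemma gprod_le_dist_right (x y p : X) : gprod x y p ≤ dist y p := by
  have h := dist_triangle x y p
  unfold gprod; linarith

lemma dist_sub_le_gprod (x y p : X) : dist x p - dist x y ≤ gprod x y p := by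
  have h := dist_triangle x y p
  unfold gprod; linarith

lemma gprod_self (a p : X) : gprod a a p = dist a p := by
  unfold gprod; simp

lemma IsUnitSpeed.dist_le {γ : ℝ → X} {T : ℝ} (h : IsUnitSpeed γ T) {s t : ℝ}
    (hs : 0 ≤ s) (hst : s ≤ t) (ht : t ≤ T) : dist (γ s) (γ t) ≤ t - s := by
  have h1 : edist (γ s) (γ t) ≤ eVariationOn γ (Set.Icc s t) :=
    eVariationOn.edist_le γ ⟨le_refl s, hst⟩ ⟨hst, le_refl t⟩
  rw [h.2 s t hs hst ht] at h1
  exact (edist_le_ofReal (by linarith)).1 h1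

lemma rho_cont (ε : ℝ) (p : X) : Continuous (rho ε p) := by
  unfold rho
  exact Real.continuous_exp.comp ((continuous_const.mul (continuous_id.dist continuous_const)).neg)

lemma rho_piece_integrable {γ : ℝ → X} {T : ℝ} (h : IsUnitSpeed γ T) (ε : ℝ) (p : X)
    {a b : ℝ} (ha : 0 ≤ a) (hab : a ≤ b) (hb : b ≤ T) :
    IntervalIntegrable (fun t => rho ε p (γ t)) MeasureTheory.volume a b := by
  apply ContinuousOn.intervalIntegrable
  have hsub : uIcc a b ⊆ Set.Icc 0 T := by
    rw [uIcc_of_le hab]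
    intro z hz
    exact ⟨le_trans ha hz.1, le_trans hz.2 hb⟩
  exact (rho_cont ε p).comp_continuousOn (h.1.mono hsub)

lemma integral_exp_affine {k : ℝ} (hk : k ≠ 0) (c a b : ℝ) :
    ∫ t in a..b, Real.exp (k * t + c) = (Real.exp (k * b + c) - Real.exp (k * a + c)) / k := by
  have hd : ∀ t ∈ uIcc a b,
      HasDerivAt (fun u => Real.exp (k * u + c) / k) (Real.exp (k * t + c)) t := by
    intro t _
    have h1 : HasDerivAt (fun u : ℝ => k * u + c) k t := by
      simpa using ((hasDerivAt_id t).const_mul k).add_const c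
    have h2 := (Real.hasDerivAt_exp (k * t + c)).comp t h1
    have h3 := h2.div_const k
    simpa [mul_div_assoc, mul_div_cancel_right₀ _ hk] using h3
  rw [intervalIntegral.integral_eq_sub_of_hasDerivAt hd]
  · ring
  · apply Continuous.intervalIntegrable
    exact Real.continuous_exp.comp ((continuous_const.mul continuous_id).add continuous_const)

lemma chain_bound {K : ℝ} (hK1 : 1 ≤ K) (hK2 : K ^ 2 ≤ 2) (v : X → X → ℝ)
    (hpos : ∀ a b, 0 < v a b)
    (hdiagL : ∀ a b, v a a ≤ v a b)
    (hdiagR : ∀ a b, v b b ≤ v a b)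
    (hq : ∀ a b c, v a c ≤ K * max (v a b) (v b c)) :
    ∀ n : ℕ, 1 ≤ n → ∀ z : ℕ → X,
      v (z 0) (z n) ≤ 2 * K ^ 2 * ∑ i ∈ Finset.range n, v (z i) (z (i + 1)) := by
  intro n
  induction n using Nat.strong_induction_on with
  | _ n IH =>
    intro hn z
    set S := ∑ i ∈ Finset.range n, v (z i) (z (i + 1)) with hSdef
    have hterm : ∀ i, i ∈ Finset.range n → v (z i) (z (i + 1)) ≤ S := fun i hi =>
      Finset.single_le_sum (f := fun i => v (z i) (z (i + 1))) (fun j _ => (hpos _ _).le) hi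
    have hS0 : 0 < S := Finset.sum_pos (fun i _ => hpos _ _) ⟨0, Finset.mem_range.2 hn⟩
    have hK0 : (0:ℝ) < K := lt_of_lt_of_le one_pos hK1
    have hKsq1 : 1 ≤ K ^ 2 := by nlinarith
    set P : ℕ → Prop := fun m => ∑ i ∈ Finset.range m, v (z i) (z (i + 1)) ≤ S / 2 with hPdef
    have hP0 : P 0 := by simp only [hPdef, Finset.range_zero, Finset.sum_empty]; positivity
    set m := Nat.findGreatest P (n - 1) with hmdef
    have hm_le : m ≤ n - 1 := Nat.findGreatest_le _
    have hmP : P m := Nat.findGreatest_spec (Nat.zero_le _) hP0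
    have hm_lt : m < n := lt_of_le_of_lt hm_le (by omega)
    have hA : v (z 0) (z m) ≤ K ^ 2 * S := by
      rcases Nat.eq_zero_or_pos m with h0 | h1
      · rw [h0]
        calc v (z 0) (z 0) ≤ v (z 0) (z 1) := hdiagL _ _
          _ ≤ S := hterm 0 (Finset.mem_range.2 hn)
          _ ≤ K ^ 2 * S := le_mul_of_one_le_left hS0.le hKsq1
      · calc v (z 0) (z m) ≤ 2 * K ^ 2 * ∑ i ∈ Finset.range m, v (z i) (z (i + 1)) :=
              IH m hm_lt h1 z
          _ ≤ 2 * K ^ 2 * (S / 2) := by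
              apply mul_le_mul_of_nonneg_left hmP (by positivity)
          _ = K ^ 2 * S := by ring
    have hC : v (z (m + 1)) (z n) ≤ K ^ 2 * S := by
      rcases eq_or_lt_of_le (show m + 1 ≤ n from hm_lt) with he | hlt
      · have hterm' : v (z m) (z n) ≤ S := by
          have := hterm m (Finset.mem_range.2 hm_lt)
          rwa [he] at this
        calc v (z (m + 1)) (z n) = v (z n) (z n) := by rw [he]
          _ ≤ v (z m) (z n) := hdiagR _ _
          _ ≤ S := hterm'
          _ ≤ K ^ 2 * S := le_mul_of_one_le_left hS0.le hKsq1
      · have hnotP : ¬ P (m + 1) := by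
          intro hP
          have h2 : m + 1 ≤ n - 1 := by omega
          have h3 := Nat.le_findGreatest h2 hP
          rw [← hmdef] at h3
          omega
        have hpre : S / 2 < ∑ i ∈ Finset.range (m + 1), v (z i) (z (i + 1)) := by
          simpa [hPdef] using not_le.1 hnotP
        set k := n - (m + 1) with hkdef
        have hk1 : 1 ≤ k := by omega
        have hkn : k < n := by omega
        have e1 : S = ∑ i ∈ Finset.range (m + 1), v (z i) (z (i + 1))
            + ∑ i ∈ Finset.Ico (m + 1) n, v (z i) (z (i + 1)) := by
          rw [hSdef, Finset.range_eq_Ico,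
            ← Finset.sum_Ico_consecutive _ (Nat.zero_le _) (le_of_lt hlt),
            ← Finset.range_eq_Ico]
        have e2 : ∑ i ∈ Finset.Ico (m + 1) n, v (z i) (z (i + 1))
            = ∑ i ∈ Finset.range k, v (z (m + 1 + i)) (z (m + 1 + i + 1)) := by
          rw [Finset.sum_Ico_eq_sum_range]
        have hsuf : ∑ i ∈ Finset.range k, v (z (m + 1 + i)) (z (m + 1 + i + 1)) ≤ S / 2 := by
          rw [e2] at e1; linarith
        have hIH := IH k hkn hk1 (fun i => z (m + 1 + i))
        simp only [Nat.add_zero] at hIH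
        have hkey : m + 1 + k = n := by omega
        rw [hkey] at hIH
        calc v (z (m + 1)) (z n)
            ≤ 2 * K ^ 2 * ∑ i ∈ Finset.range k, v (z (m + 1 + i)) (z (m + 1 + i + 1)) := hIH
          _ ≤ 2 * K ^ 2 * (S / 2) := mul_le_mul_of_nonneg_left hsuf (by positivity)
          _ = K ^ 2 * S := by ring
    have hB : v (z m) (z (m + 1)) ≤ K ^ 2 * S :=
      le_trans (hterm m (Finset.mem_range.2 hm_lt)) (le_mul_of_one_le_left hS0.le hKsq1)
    have h1 : v (z m) (z n) ≤ K * (K ^ 2 * S) :=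
      le_trans (hq _ (z (m + 1)) _) (mul_le_mul_of_nonneg_left (max_le hB hC) hK0.le)
    have hmono : K ^ 2 * S ≤ K * (K ^ 2 * S) := by
      nlinarith [mul_nonneg (mul_nonneg (sub_nonneg.2 hK1) (sq_nonneg K)) hS0.le]
    have h2 : v (z 0) (z n) ≤ K * (K * (K ^ 2 * S)) := by
      refine le_trans (hq _ (z m) _) (mul_le_mul_of_nonneg_left (max_le ?_ h1) hK0.le)
      exact le_trans hA hmono
    nlinarith [h2, mul_nonneg (mul_nonneg (sub_nonneg.2 hK2) (sq_nonneg K)) hS0.le]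

end Aux
section Lower
variable {X : Type*} [MetricSpace X]

set_option maxHeartbeats 2000000 in
lemma curve_lower {δ ε : ℝ} (hδ : 0 ≤ δ) (hε : 0 < ε)
    (hK2 : Real.exp (ε * δ) ^ 2 ≤ 2) (p : X) (hhyp : GromovHyperbolic X δ)
    (x y : X) {γ : ℝ → X} {T : ℝ} (hT : 0 ≤ T) (hUS : IsUnitSpeed γ T)
    (hx : γ 0 = x) (hy : γ T = y) :
    Real.exp (-(ε * gprod x y p)) / ε * min (1 / 2) (ε * dist x y)
      ≤ 6 * Real.exp 2 * ∫ u in (0:ℝ)..T, rho ε p (γ u) := by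
  set I := ∫ u in (0:ℝ)..T, rho ε p (γ u) with hIdef
  have hdT : dist x y ≤ T := by
    have h := hUS.dist_le (le_refl (0:ℝ)) hT le_rfl
    rw [hx, hy] at h; linarith
  rcases le_or_gt (ε * dist x y) (1 / 2) with hcase | hcase
  · -- Case A : ε d ≤ 1/2
    rw [min_eq_right hcase]
    set d := dist x y with hd
    have hd0 : (0:ℝ) ≤ d := dist_nonneg
    have hint1 : IntervalIntegrable (fun u => rho ε p (γ u)) volume 0 d :=
      rho_piece_integrable hUS ε p le_rfl hd0 hdT
    have hint2 : IntervalIntegrable (fun u => rho ε p (γ u)) volume d T :=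
      rho_piece_integrable hUS ε p hd0 hdT le_rfl
    have hsplit := intervalIntegral.integral_add_adjacent_intervals hint1 hint2
    have hpos2 : 0 ≤ ∫ u in d..T, rho ε p (γ u) :=
      intervalIntegral.integral_nonneg hdT (fun u _ => (Real.exp_pos _).le)
    have hpt : ∀ u ∈ Icc (0:ℝ) d, Real.exp (-(ε * (dist x p + d))) ≤ rho ε p (γ u) := by
      intro u hu
      have h3 : dist (γ 0) (γ u) ≤ u := by
        simpa using hUS.dist_le le_rfl hu.1 (le_trans hu.2 hdT)
      have h1 : dist (γ u) p ≤ dist x p + d := by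
        calc dist (γ u) p ≤ dist (γ u) (γ 0) + dist (γ 0) p := dist_triangle _ _ _
          _ = dist (γ 0) (γ u) + dist x p := by rw [dist_comm, hx]
          _ ≤ d + dist x p := by linarith [hu.2]
          _ = dist x p + d := by ring
      unfold rho
      apply Real.exp_le_exp.2
      nlinarith
    have hmono := intervalIntegral.integral_mono_on hd0 intervalIntegrable_const hint1 hpt
    rw [intervalIntegral.integral_const, smul_eq_mul, sub_zero] at hmono
    have hlb : d * Real.exp (-(ε * (dist x p + d))) ≤ I := by
      rw [hIdef, ← hsplit]; linarith
    have hdxp : dist x p ≤ gprod x y p + d := by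
      have := dist_sub_le_gprod x y p; rw [← hd] at this; linarith
    have hexp : Real.exp (-(ε * gprod x y p)) * Real.exp (-1) ≤ Real.exp (-(ε * (dist x p + d))) := by
      rw [← Real.exp_add]
      apply Real.exp_le_exp.2
      nlinarith [mul_le_mul_of_nonneg_left hdxp hε.le]
    have hI1 : d * (Real.exp (-(ε * gprod x y p)) * Real.exp (-1)) ≤ I :=
      le_trans (mul_le_mul_of_nonneg_left hexp hd0) hlb
    have he1 : Real.exp 2 * Real.exp (-1) = Real.exp 1 := by rw [← Real.exp_add]; norm_num
    have he2 : (1:ℝ) ≤ Real.exp 1 := Real.one_le_exp (by norm_num)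
    have hgoal_eq : Real.exp (-(ε * gprod x y p)) / ε * (ε * d)
        = Real.exp (-(ε * gprod x y p)) * d := by field_simp
    rw [hgoal_eq]
    have step1 : 6 * Real.exp 2 * (d * (Real.exp (-(ε * gprod x y p)) * Real.exp (-1)))
        ≤ 6 * Real.exp 2 * I := mul_le_mul_of_nonneg_left hI1 (by positivity)
    have step2 : 6 * Real.exp 2 * (d * (Real.exp (-(ε * gprod x y p)) * Real.exp (-1)))
        = 6 * Real.exp 1 * (d * Real.exp (-(ε * gprod x y p))) := by
      rw [← he1]; ring
    have step3 : Real.exp (-(ε * gprod x y p)) * d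
        ≤ 6 * Real.exp 1 * (d * Real.exp (-(ε * gprod x y p))) := by
      nlinarith [mul_nonneg hd0 (Real.exp_pos (-(ε * gprod x y p))).le]
    rw [step2] at step1
    linarith [step1, step3]
  · -- Case B : 1/2 < ε d
    rw [min_eq_left hcase.le]
    set d := dist x y with hd
    have hd0 : 0 < d := by nlinarith
    have hT0 : 0 < T := lt_of_lt_of_le hd0 hdT
    have hεT : 1 / 2 ≤ ε * T := le_trans hcase.le (by nlinarith)
    set n := ⌈ε * T⌉₊ with hndef
    have hn1 : 1 ≤ n := Nat.one_le_ceil_iff.2 (by nlinarith)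
    have hnpos : (0:ℝ) < n := by exact_mod_cast hn1
    have hnne : (n:ℝ) ≠ 0 := ne_of_gt hnpos
    have hge : ε * T ≤ n := Nat.le_ceil _
    have hle3 : (n:ℝ) ≤ 3 * (ε * T) := by
      have h := Nat.ceil_lt_add_one (by positivity : (0:ℝ) ≤ ε * T)
      rw [← hndef] at h
      linarith
    set τ := T / n with hτdef
    have hτpos : 0 < τ := by positivity
    have hτle : ε * τ ≤ 1 := by
      have h9 : ε * τ = (ε * T) / n := by rw [hτdef]; ring
      rw [h9, div_le_one hnpos]; exact hge
    have hτge : 1 / (3 * ε) ≤ τ := by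
      rw [hτdef, div_le_div_iff₀ (by positivity) hnpos]
      nlinarith
    set t : ℕ → ℝ := fun i => (i : ℝ) * τ with htdef
    have ht0 : t 0 = 0 := by simp [htdef]
    have htn : t n = T := by
      show (n : ℝ) * τ = T
      rw [hτdef]; field_simp
    have hstep : ∀ i : ℕ, t (i + 1) - t i = τ := by
      intro i
      show (((i+1 : ℕ)) : ℝ) * τ - (i:ℝ) * τ = τ
      push_cast; ring
    have htmem : ∀ i : ℕ, i ≤ n → 0 ≤ t i ∧ t i ≤ T := by
      intro i hi
      constructor
      · show (0:ℝ) ≤ (i:ℝ) * τ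
        positivity
      · rw [← htn]
        show (i:ℝ) * τ ≤ (n:ℝ) * τ
        apply mul_le_mul_of_nonneg_right _ hτpos.le
        exact_mod_cast hi
    have hmemle : ∀ i : ℕ, t i ≤ t (i + 1) := by
      intro i; have := hstep i; linarith [hτpos]
    clear_value t τ n
    have hpiece_int : ∀ k, k < n →
        IntervalIntegrable (fun u => rho ε p (γ u)) volume (t k) (t (k + 1)) := by
      intro k hk
      exact rho_piece_integrable hUS ε p (htmem k hk.le).1 (hmemle k) (htmem (k + 1) hk).2
    have hsum := intervalIntegral.sum_integral_adjacent_intervals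
      (μ := volume) (f := fun u => rho ε p (γ u)) hpiece_int
    rw [ht0, htn] at hsum
    set v : ℕ → ℝ := fun k => Real.exp (-(ε * gprod (γ (t k)) (γ (t (k + 1))) p)) with hvdef
    have hpiece : ∀ k, k < n →
        τ * (Real.exp (-2) * v k) ≤ ∫ u in t k..t (k + 1), rho ε p (γ u) := by
      intro k hk
      have hk0 : 0 ≤ t k := (htmem k hk.le).1
      have hk1T : t (k + 1) ≤ T := (htmem (k + 1) hk).2
      have hkk : t k ≤ t (k + 1) := hmemle k
      have hpt : ∀ u ∈ Icc (t k) (t (k + 1)),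
          Real.exp (-(ε * (dist (γ (t k)) p + τ))) ≤ rho ε p (γ u) := by
        intro u hu
        have hdist : dist (γ (t k)) (γ u) ≤ u - t k := hUS.dist_le hk0 hu.1 (le_trans hu.2 hk1T)
        have h1 : dist (γ u) p ≤ dist (γ (t k)) p + τ := by
          have h2 := dist_triangle (γ u) (γ (t k)) p
          rw [dist_comm (γ u) (γ (t k))] at h2
          have h5 : u - t k ≤ τ := by have := hstep k; linarith [hu.2]
          linarith
        unfold rho
        apply Real.exp_le_exp.2
        nlinarith
      have hmono := intervalIntegral.integral_mono_on hkk intervalIntegrable_const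
        (hpiece_int k hk) hpt
      rw [intervalIntegral.integral_const, smul_eq_mul, hstep k] at hmono
      have hv : v k ≤ Real.exp (-(ε * (dist (γ (t k)) p - τ))) := by
        show Real.exp (-(ε * gprod (γ (t k)) (γ (t (k + 1))) p))
          ≤ Real.exp (-(ε * (dist (γ (t k)) p - τ)))
        apply Real.exp_le_exp.2
        have h3 := dist_sub_le_gprod (γ (t k)) (γ (t (k + 1))) p
        have h4 : dist (γ (t k)) (γ (t (k + 1))) ≤ τ := by
          have := hUS.dist_le hk0 hkk hk1T; linarith [hstep k]
        nlinarith
      have hcompare : Real.exp (-2) * v k ≤ Real.exp (-(ε * (dist (γ (t k)) p + τ))) := by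
        calc Real.exp (-2) * v k ≤ Real.exp (-2) * Real.exp (-(ε * (dist (γ (t k)) p - τ))) :=
              mul_le_mul_of_nonneg_left hv (Real.exp_pos _).le
          _ = Real.exp (-2 + -(ε * (dist (γ (t k)) p - τ))) := (Real.exp_add _ _).symm
          _ ≤ Real.exp (-(ε * (dist (γ (t k)) p + τ))) := by
              apply Real.exp_le_exp.2
              nlinarith
      calc τ * (Real.exp (-2) * v k) ≤ τ * Real.exp (-(ε * (dist (γ (t k)) p + τ))) :=
            mul_le_mul_of_nonneg_left hcompare hτpos.le
        _ ≤ ∫ u in t k..t (k + 1), rho ε p (γ u) := hmono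
    have hsum_ge : ∑ k ∈ Finset.range n, (τ * (Real.exp (-2) * v k)) ≤ I := by
      rw [hIdef, ← hsum]
      exact Finset.sum_le_sum (fun k hk => hpiece k (Finset.mem_range.1 hk))
    have hfactor : ∑ k ∈ Finset.range n, (τ * (Real.exp (-2) * v k))
        = τ * Real.exp (-2) * ∑ k ∈ Finset.range n, v k := by
      rw [Finset.mul_sum]
      apply Finset.sum_congr rfl
      intro i _; ring
    have hK1 : 1 ≤ Real.exp (ε * δ) := Real.one_le_exp (by positivity)
    have hch : Real.exp (-(ε * gprod (γ (t 0)) (γ (t n)) p))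
        ≤ 2 * Real.exp (ε * δ) ^ 2 * ∑ i ∈ Finset.range n, v i :=
      chain_bound hK1 hK2 (fun a b => Real.exp (-(ε * gprod a b p)))
        (fun a b => Real.exp_pos _)
        (fun a b => by
          apply Real.exp_le_exp.2
          have h1 := mul_le_mul_of_nonneg_left (gprod_le_dist_left a b p) hε.le
          rw [gprod_self]; linarith)
        (fun a b => by
          apply Real.exp_le_exp.2
          have h1 := mul_le_mul_of_nonneg_left (gprod_le_dist_right a b p) hε.le
          rw [gprod_self]; linarith)
        (fun a b c => by
          have hmin := hhyp a b c p
          have h5 : -(ε * gprod a c p)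
              ≤ ε * δ + max (-(ε * gprod a b p)) (-(ε * gprod b c p)) := by
            rcases le_total (gprod a b p) (gprod b c p) with h6 | h6
            · rw [min_eq_left h6] at hmin
              have h7 : -(ε * gprod a b p)
                  ≤ max (-(ε * gprod a b p)) (-(ε * gprod b c p)) := le_max_left _ _
              nlinarith [mul_le_mul_of_nonneg_left
                (show gprod a b p - δ ≤ gprod a c p by linarith) hε.le]
            · rw [min_eq_right h6] at hmin
              have h7 : -(ε * gprod b c p)
                  ≤ max (-(ε * gprod a b p)) (-(ε * gprod b c p)) := le_max_right _ _
              nlinarith [mul_le_mul_of_nonneg_left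
                (show gprod b c p - δ ≤ gprod a c p by linarith) hε.le]
          calc Real.exp (-(ε * gprod a c p))
              ≤ Real.exp (ε * δ + max (-(ε * gprod a b p)) (-(ε * gprod b c p))) :=
                Real.exp_le_exp.2 h5
            _ = Real.exp (ε * δ) *
                max (Real.exp (-(ε * gprod a b p))) (Real.exp (-(ε * gprod b c p))) := by
                rw [Real.exp_add, Real.exp_monotone.map_max])
        n hn1 (fun i => γ (t i))
    rw [ht0, htn, hx, hy] at hch
    have hSumpos : 0 ≤ ∑ k ∈ Finset.range n, v k :=
      Finset.sum_nonneg (fun k _ => (Real.exp_pos _).le)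
    have hch4 : Real.exp (-(ε * gprod x y p)) ≤ 4 * ∑ k ∈ Finset.range n, v k := by
      calc Real.exp (-(ε * gprod x y p))
          ≤ 2 * Real.exp (ε * δ) ^ 2 * ∑ k ∈ Finset.range n, v k := hch
        _ ≤ 4 * ∑ k ∈ Finset.range n, v k := by nlinarith
    have hIge : 1 / (3 * ε) * Real.exp (-2) * (Real.exp (-(ε * gprod x y p)) / 4) ≤ I := by
      have hA1 : 1 / (3 * ε) * Real.exp (-2) * (Real.exp (-(ε * gprod x y p)) / 4)
          ≤ τ * Real.exp (-2) * ∑ k ∈ Finset.range n, v k := by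
        have hq1 : Real.exp (-(ε * gprod x y p)) / 4 ≤ ∑ k ∈ Finset.range n, v k := by
          linarith
        have hq2 : 1 / (3 * ε) * Real.exp (-2) ≤ τ * Real.exp (-2) :=
          mul_le_mul_of_nonneg_right hτge (Real.exp_pos _).le
        apply mul_le_mul hq2 hq1 (by positivity) (by positivity)
      rw [hfactor] at hsum_ge
      linarith [hsum_ge]
    have he0 : Real.exp 2 * Real.exp (-2) = 1 := by
      rw [← Real.exp_add]; norm_num
    have hstep1 := mul_le_mul_of_nonneg_left hIge (by positivity : (0:ℝ) ≤ 6 * Real.exp 2)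
    have heq : 6 * Real.exp 2 * (1 / (3 * ε) * Real.exp (-2) * (Real.exp (-(ε * gprod x y p)) / 4))
        = Real.exp (-(ε * gprod x y p)) / ε * (1 / 2) := by
      have h1 : 6 * Real.exp 2 * (1 / (3 * ε) * Real.exp (-2) * (Real.exp (-(ε * gprod x y p)) / 4))
          = (Real.exp 2 * Real.exp (-2)) * (Real.exp (-(ε * gprod x y p)) / ε * (1 / 2)) := by
        field_simp
        ring
      rw [h1, he0, one_mul]
    rw [heq] at hstep1
    linarith [hstep1]

end Lower

section Upper
variable {X : Type*} [MetricSpace X]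

set_option maxHeartbeats 2000000 in
lemma curve_upper {ε : ℝ} (hε : 0 < ε) (p x y : X) (hint : Intrinsic X) :
    ∃ (γ : ℝ → X) (T : ℝ), 0 ≤ T ∧ IsUnitSpeed γ T ∧ γ 0 = x ∧ γ T = y ∧
      (∫ u in (0:ℝ)..T, rho ε p (γ u)) ≤
        6 * Real.exp 2 * (Real.exp (-(ε * gprod x y p)) / ε * min (1 / 2) (ε * dist x y)) := by
  rcases le_or_gt (ε * dist x y) (1 / 2) with hcase | hcase
  · obtain ⟨γ, T, hT0, hUS, hx, hy, hTle⟩ := hint x y 2 one_lt_two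
    refine ⟨γ, T, hT0, hUS, hx, hy, ?_⟩
    rw [min_eq_right hcase]
    set d := dist x y with hd
    have hd0 : (0:ℝ) ≤ d := dist_nonneg
    have hpt : ∀ u ∈ Icc (0:ℝ) T, rho ε p (γ u) ≤ Real.exp (-(ε * (dist x p - T))) := by
      intro u hu
      unfold rho
      apply Real.exp_le_exp.2
      have h3 : dist (γ 0) (γ u) ≤ u := by simpa using hUS.dist_le le_rfl hu.1 hu.2
      have h2 : dist x p ≤ dist (γ u) p + u := by
        calc dist x p = dist (γ 0) p := by rw [hx]
          _ ≤ dist (γ 0) (γ u) + dist (γ u) p := dist_triangle _ _ _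
          _ ≤ u + dist (γ u) p := by linarith
          _ = dist (γ u) p + u := by ring
      have h4 : dist x p - T ≤ dist (γ u) p := by linarith [hu.2]
      nlinarith
    have hint1 : IntervalIntegrable (fun u => rho ε p (γ u)) volume 0 T :=
      rho_piece_integrable hUS ε p le_rfl hT0 le_rfl
    have hmono := intervalIntegral.integral_mono_on hT0 hint1 intervalIntegrable_const hpt
    rw [intervalIntegral.integral_const, smul_eq_mul, sub_zero] at hmono
    have hTd : T ≤ 2 * d := hTle
    have hεT : ε * T ≤ 1 := by nlinarith
    have hPd : gprod x y p ≤ dist x p := gprod_le_dist_left x y p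
    have hexp : Real.exp (-(ε * (dist x p - T))) ≤ Real.exp (-(ε * gprod x y p)) * Real.exp 1 := by
      rw [← Real.exp_add]
      apply Real.exp_le_exp.2
      nlinarith [mul_le_mul_of_nonneg_left hPd hε.le]
    have hfinal : T * Real.exp (-(ε * (dist x p - T)))
        ≤ 2 * d * (Real.exp (-(ε * gprod x y p)) * Real.exp 1) :=
      mul_le_mul hTd hexp (Real.exp_pos _).le (by linarith)
    have heq : 6 * Real.exp 2 * (Real.exp (-(ε * gprod x y p)) / ε * (ε * d))
        = 6 * Real.exp 2 * (Real.exp (-(ε * gprod x y p)) * d) := by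
      field_simp
    rw [heq]
    have h2e : 2 * d * (Real.exp (-(ε * gprod x y p)) * Real.exp 1)
        ≤ 6 * Real.exp 2 * (Real.exp (-(ε * gprod x y p)) * d) := by
      have h1 : Real.exp 1 ≤ Real.exp 2 := Real.exp_le_exp.2 (by norm_num)
      nlinarith [mul_nonneg hd0 (Real.exp_pos (-(ε * gprod x y p))).le, Real.exp_pos 1]
    linarith
  · have hd0 : 0 < dist x y := by nlinarith
    have hc1 : 1 < 1 + 1 / (2 * ε * dist x y) := by
      have : 0 < 1 / (2 * ε * dist x y) := by positivity
      linarith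
    obtain ⟨γ, T, hT0, hUS, hx, hy, hTle⟩ := hint x y _ hc1
    refine ⟨γ, T, hT0, hUS, hx, hy, ?_⟩
    rw [min_eq_left hcase.le]
    set d := dist x y with hd
    have hTd : T ≤ d + 1 / (2 * ε) := by
      have h9 : (1 + 1 / (2 * ε * d)) * d = d + 1 / (2 * ε) := by
        field_simp
      rw [h9] at hTle
      exact hTle
    set t₀ := dist x p - gprod x y p with ht₀
    have ht₀0 : 0 ≤ t₀ := by
      have := gprod_le_dist_left x y p; rw [ht₀]; linarith
    have ht₀d : t₀ ≤ d := by
      have := dist_sub_le_gprod x y p; rw [ht₀]; rw [← hd] at this; linarith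
    have hdT : d ≤ T := by
      have h := hUS.dist_le (le_refl (0:ℝ)) hT0 le_rfl
      rw [hx, hy] at h; rw [hd]; linarith
    have ht₀T : t₀ ≤ T := le_trans ht₀d hdT
    have hint1 : IntervalIntegrable (fun u => rho ε p (γ u)) volume 0 t₀ :=
      rho_piece_integrable hUS ε p le_rfl ht₀0 ht₀T
    have hint2 : IntervalIntegrable (fun u => rho ε p (γ u)) volume t₀ T :=
      rho_piece_integrable hUS ε p ht₀0 ht₀T le_rfl
    have hsplit := intervalIntegral.integral_add_adjacent_intervals hint1 hint2
    have hI1 : ∫ u in (0:ℝ)..t₀, rho ε p (γ u) ≤ Real.exp (-(ε * gprod x y p)) / ε := by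
      have hpt1 : ∀ u ∈ Icc (0:ℝ) t₀, rho ε p (γ u) ≤ Real.exp (ε * u + -(ε * dist x p)) := by
        intro u hu
        unfold rho
        apply Real.exp_le_exp.2
        have h3 : dist (γ 0) (γ u) ≤ u := by
          simpa using hUS.dist_le le_rfl hu.1 (le_trans hu.2 ht₀T)
        have h2 : dist x p - u ≤ dist (γ u) p := by
          have h5 : dist x p ≤ dist (γ 0) (γ u) + dist (γ u) p := by
            rw [← hx]; exact dist_triangle _ _ _
          linarith
        nlinarith
      have hintc : IntervalIntegrable (fun u => Real.exp (ε * u + -(ε * dist x p))) volume 0 t₀ := by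
        apply Continuous.intervalIntegrable
        exact Real.continuous_exp.comp ((continuous_const.mul continuous_id).add continuous_const)
      have hmono := intervalIntegral.integral_mono_on ht₀0 hint1 hintc hpt1
      rw [integral_exp_affine (ne_of_gt hε)] at hmono
      have he : ε * t₀ + -(ε * dist x p) = -(ε * gprod x y p) := by rw [ht₀]; ring
      calc ∫ u in (0:ℝ)..t₀, rho ε p (γ u)
          ≤ (Real.exp (ε * t₀ + -(ε * dist x p)) - Real.exp (ε * 0 + -(ε * dist x p))) / ε :=
            hmono
        _ ≤ Real.exp (ε * t₀ + -(ε * dist x p)) / ε :=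
            (div_le_div_iff_of_pos_right hε).2 (sub_le_self _ (Real.exp_pos _).le)
        _ = Real.exp (-(ε * gprod x y p)) / ε := by rw [he]
    have hI2 : ∫ u in t₀..T, rho ε p (γ u) ≤ Real.exp (-(ε * gprod x y p)) * Real.exp 1 / ε := by
      have hpt2 : ∀ u ∈ Icc t₀ T,
          rho ε p (γ u) ≤ Real.exp (-ε * u + (ε * T + -(ε * dist y p))) := by
        intro u hu
        unfold rho
        apply Real.exp_le_exp.2
        have h3 : dist (γ u) (γ T) ≤ T - u := hUS.dist_le (le_trans ht₀0 hu.1) hu.2 le_rfl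
        have h2 : dist y p - (T - u) ≤ dist (γ u) p := by
          have h5 : dist y p ≤ dist (γ u) (γ T) + dist (γ u) p := by
            rw [← hy]
            calc dist (γ T) p ≤ dist (γ T) (γ u) + dist (γ u) p := dist_triangle _ _ _
              _ = dist (γ u) (γ T) + dist (γ u) p := by rw [dist_comm (γ T) (γ u)]
          linarith
        nlinarith
      have hintc : IntervalIntegrable
          (fun u => Real.exp (-ε * u + (ε * T + -(ε * dist y p)))) volume t₀ T := by
        apply Continuous.intervalIntegrable
        exact Real.continuous_exp.comp ((continuous_const.mul continuous_id).add continuous_const)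
      have hmono := intervalIntegral.integral_mono_on ht₀T hint2 hintc hpt2
      rw [integral_exp_affine (by linarith : -ε ≠ 0)] at hmono
      have hflip : (Real.exp (-ε * T + (ε * T + -(ε * dist y p)))
            - Real.exp (-ε * t₀ + (ε * T + -(ε * dist y p)))) / (-ε)
          = (Real.exp (-ε * t₀ + (ε * T + -(ε * dist y p)))
            - Real.exp (-ε * T + (ε * T + -(ε * dist y p)))) / ε := by
        rw [div_neg, ← neg_div, neg_sub]
      rw [hflip] at hmono
      calc ∫ u in t₀..T, rho ε p (γ u)
          ≤ (Real.exp (-ε * t₀ + (ε * T + -(ε * dist y p)))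
            - Real.exp (-ε * T + (ε * T + -(ε * dist y p)))) / ε := hmono
        _ ≤ Real.exp (-ε * t₀ + (ε * T + -(ε * dist y p))) / ε :=
            (div_le_div_iff_of_pos_right hε).2 (sub_le_self _ (Real.exp_pos _).le)
        _ ≤ Real.exp (-(ε * gprod x y p)) * Real.exp 1 / ε := by
            apply (div_le_div_iff_of_pos_right hε).2
            rw [← Real.exp_add]
            apply Real.exp_le_exp.2
            have hsum : dist x p + dist y p = 2 * gprod x y p + d := by
              rw [hd]; unfold gprod; ring
            have h10 : ε * t₀ = ε * dist x p - ε * gprod x y p := by rw [ht₀]; ring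
            have h11 : ε * dist x p + ε * dist y p = 2 * (ε * gprod x y p) + ε * d := by
              linear_combination ε * hsum
            have h9 : ε * (d + 1 / (2 * ε)) = ε * d + 1 / 2 := by
              field_simp
            have hT2 : ε * T ≤ ε * d + 1 / 2 := by
              have h12 := mul_le_mul_of_nonneg_left hTd hε.le
              rw [h9] at h12
              exact h12
            linarith
    rw [← hsplit]
    have h1 : (1:ℝ) ≤ Real.exp 1 := Real.one_le_exp (by norm_num)
    have h2 : Real.exp 1 ≤ Real.exp 2 := Real.exp_le_exp.2 (by norm_num)
    have hE := (Real.exp_pos (-(ε * gprod x y p))).le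
    have key : Real.exp (-(ε * gprod x y p)) * (1 + Real.exp 1)
        ≤ Real.exp (-(ε * gprod x y p)) * (3 * Real.exp 2) := by nlinarith
    calc (∫ u in (0:ℝ)..t₀, rho ε p (γ u)) + ∫ u in t₀..T, rho ε p (γ u)
        ≤ Real.exp (-(ε * gprod x y p)) / ε + Real.exp (-(ε * gprod x y p)) * Real.exp 1 / ε :=
          add_le_add hI1 hI2
      _ = Real.exp (-(ε * gprod x y p)) * (1 + Real.exp 1) / ε := by ring
      _ ≤ Real.exp (-(ε * gprod x y p)) * (3 * Real.exp 2) / ε := (div_le_div_iff_of_pos_right hε).2 key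
      _ = 6 * Real.exp 2 * (Real.exp (-(ε * gprod x y p)) / ε * (1 / 2)) := by ring

end Upper

/-- Lemma 3.2 / `Lemma 12`: for an intrinsic `δ`-hyperbolic space
there are `ε₀ > 0` and `C ≥ 1`, depending only on `δ`, such that for `0 < ε ≤ ε₀`
and all `x, y`:
`(1/C) d_ε(x,y) ≤ (e^{-ε(x|y)_p}/ε)·min(1/2, ε d(x,y)) ≤ C d_ε(x,y)`. -/
theorem confDist_gromov_product_comparison {X : Type*} [MetricSpace X]
    (δ : ℝ) (hδ : 0 ≤ δ) (p : X)
    (hint : Intrinsic X) (hhyp : GromovHyperbolic X δ) :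
    ∃ ε₀ C : ℝ, 0 < ε₀ ∧ 1 ≤ C ∧
      ∀ ε : ℝ, 0 < ε → ε ≤ ε₀ → ∀ x y : X,
        (1 / C) * confDist (rho ε p) x y ≤
            (Real.exp (-(ε * gprod x y p)) / ε) * min (1 / 2) (ε * dist x y) ∧
          (Real.exp (-(ε * gprod x y p)) / ε) * min (1 / 2) (ε * dist x y) ≤
            C * confDist (rho ε p) x y := by
  refine ⟨Real.log 2 / (2 * (δ + 1)), 6 * Real.exp 2, by positivity, ?_, ?_⟩
  · nlinarith [Real.one_le_exp (by norm_num : (0:ℝ) ≤ 2)]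
  · intro ε hε hεle x y
    have hCpos : (0:ℝ) < 6 * Real.exp 2 := by positivity
    have hK2 : Real.exp (ε * δ) ^ 2 ≤ 2 := by
      have h1 : ε * (2 * (δ + 1)) ≤ Real.log 2 := (le_div_iff₀ (by positivity)).1 hεle
      have h2 : 2 * (ε * δ) ≤ Real.log 2 := by nlinarith [hε.le, hδ]
      have h3 : Real.exp (ε * δ) ^ 2 = Real.exp (2 * (ε * δ)) := by
        rw [sq, ← Real.exp_add]; congr 1; ring
      rw [h3]
      calc Real.exp (2 * (ε * δ)) ≤ Real.exp (Real.log 2) := Real.exp_le_exp.2 h2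
        _ = 2 := Real.exp_log (by norm_num)
    set S := { l : ℝ | ∃ (γ : ℝ → X) (T : ℝ), 0 ≤ T ∧ IsUnitSpeed γ T ∧
      γ 0 = x ∧ γ T = y ∧ l = ∫ t in (0:ℝ)..T, rho ε p (γ t) } with hSdef
    have hconf : confDist (rho ε p) x y = sInf S := rfl
    have hne : S.Nonempty := by
      obtain ⟨γ, T, h1, h2, h3, h4, _⟩ := hint x y 2 one_lt_two
      exact ⟨_, γ, T, h1, h2, h3, h4, rfl⟩
    have hbdd : BddBelow S := by
      refine ⟨0, ?_⟩
      rintro l ⟨γ, T, hT, hUS, hx', hy', rfl⟩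
      exact intervalIntegral.integral_nonneg hT (fun u _ => (Real.exp_pos _).le)
    constructor
    · obtain ⟨γ, T, hT, hUS, hx', hy', hbound⟩ := curve_upper hε p x y hint
      have hmem : (∫ u in (0:ℝ)..T, rho ε p (γ u)) ∈ S := ⟨γ, T, hT, hUS, hx', hy', rfl⟩
      have h1 : confDist (rho ε p) x y
          ≤ 6 * Real.exp 2 * (Real.exp (-(ε * gprod x y p)) / ε * min (1 / 2) (ε * dist x y)) :=
        le_trans (by rw [hconf]; exact csInf_le hbdd hmem) hbound
      have h2 := mul_le_mul_of_nonneg_left h1 (by positivity : (0:ℝ) ≤ 1 / (6 * Real.exp 2))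
      have h3 : 1 / (6 * Real.exp 2) *
          (6 * Real.exp 2 * (Real.exp (-(ε * gprod x y p)) / ε * min (1 / 2) (ε * dist x y)))
          = Real.exp (-(ε * gprod x y p)) / ε * min (1 / 2) (ε * dist x y) := by
        field_simp
      rw [h3] at h2
      exact h2
    · have hlow : ∀ l ∈ S, Real.exp (-(ε * gprod x y p)) / ε * min (1 / 2) (ε * dist x y)
          ≤ 6 * Real.exp 2 * l := by
        rintro l ⟨γ, T, hT, hUS, hx', hy', rfl⟩
        exact curve_lower hδ hε hK2 p hhyp x y hT hUS hx' hy'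
      have h1 : Real.exp (-(ε * gprod x y p)) / ε * min (1 / 2) (ε * dist x y)
          / (6 * Real.exp 2) ≤ sInf S := by
        apply le_csInf hne
        intro l hl
        rw [div_le_iff₀ hCpos]
        linarith [hlow l hl]
      rw [hconf]
      rw [div_le_iff₀ hCpos] at h1
      linarith [h1]
end
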